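/- arXiv:1612.06475 — 2 statements merged into one kernel-verified Lean document; each statement's English description precedes it below -/
import Mathlib

section
/- For every valid configuration c, the optimal tree is reachable from c: t*(c) ∈ D(c). (Lemma 2.) -/
/-!
Formalization of the span-based Structure/Label transition parsing system of
Cross & Huang (2016), "Span-Based Constituency Parsing with a Structure-Label
System and Provably Optimal Dynamic Oracles".

A configuration is `(z, σ, t)` where `z` is the step number, `σ` the stack of
span boundaries and `t` the set of brackets built so far.  A bracket is a
triple `(X, i, j)` with `X` a nonterminal label and `i < j ≤ n` a span.
-/

namespace SpanParser

structure Config (N : Type*) where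
  z : ℕ
  σ : List ℕ
  t : Finset (N × ℕ × ℕ)

variable {N : Type*}

/-- The span of a bracket. -/
def span (b : N × ℕ × ℕ) : ℕ × ℕ := b.2

/-- Top (rightmost) boundary of the stack. -/
def topJ (σ : List ℕ) : ℕ := σ.getLastD 0

/-- Second-to-top boundary of the stack. -/
def topI (σ : List ℕ) : ℕ := σ.dropLast.getLastD 0

/-- Parser actions: shift, combine, label-`X`, and nolabel. -/
inductive Action (N : Type*) where
  | sh : Action N
  | comb : Action N
  | label : N → Action N
  | nolabel : Action N

variable [DecidableEq N]

/-- Applicability of an action at a configuration (for sentence length `n`). -/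
def App (n : ℕ) (c : Config N) : Action N → Prop
  | .sh      => Even c.z ∧ c.σ ≠ [] ∧ topJ c.σ < n
  | .comb    => Even c.z ∧ 3 ≤ c.σ.length
  | .label _ => Odd c.z ∧ 2 ≤ c.σ.length
  | .nolabel => Odd c.z ∧ 2 ≤ c.σ.length ∧ c.z < 4 * n - 1

/-- The result `τ(c)` of applying action `τ` to configuration `c`. -/
def doAct (c : Config N) : Action N → Config N
  | .sh      => ⟨c.z + 1, c.σ ++ [topJ c.σ + 1], c.t⟩
  | .comb    => ⟨c.z + 1, c.σ.dropLast.dropLast ++ [topJ c.σ], c.t⟩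
  | .label X => ⟨c.z + 1, c.σ, insert (X, topI c.σ, topJ c.σ) c.t⟩
  | .nolabel => ⟨c.z + 1, c.σ, c.t⟩

/-- The initial configuration `(0, [0], ∅)`. -/
def initial (N : Type*) : Config N := ⟨0, [0], ∅⟩

/-- One transition step `c ⊢ c'`. -/
def Step (n : ℕ) (c c' : Config N) : Prop := ∃ a, App n c a ∧ c' = doAct c a

/-- `⊢*`: reflexive-transitive closure of the transition relation. -/
def Reaches (n : ℕ) : Config N → Config N → Prop := Relation.ReflTransGen (Step n)

/-- A configuration is valid if it is reachable from the initial configuration. -/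
def Valid (n : ℕ) (c : Config N) : Prop := Reaches n (initial N) c

/-- A final configuration: `σ = [0, n]` and `z = 4n - 2`. -/
def Final (n : ℕ) (c : Config N) : Prop := c.σ = [0, n] ∧ c.z = 4 * n - 2

/-- `D(c)`: the set of trees of final configurations reachable from `c`. -/
def Dset (n : ℕ) (c : Config N) : Set (Finset (N × ℕ × ℕ)) :=
  {t' | ∃ c', Reaches n c c' ∧ Final n c' ∧ c'.t = t'}

/-- `(i,j) ⪯ (p,q)`: span `(i,j)` is encompassed by `(p,q)`, i.e. `p ≤ i < j ≤ q`. -/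
def Enc (s₁ s₂ : ℕ × ℕ) : Prop := s₂.1 ≤ s₁.1 ∧ s₁.1 < s₁.2 ∧ s₁.2 ≤ s₂.2

/-- `(i,j) ≺ (p,q)`: strict encompassment. -/
def SEnc (s₁ s₂ : ℕ × ℕ) : Prop := Enc s₁ s₂ ∧ s₁ ≠ s₂

/-- `tG` is a gold tree for sentence length `n`: valid spans, pairwise-distinct
spans, pairwise non-crossing spans, and exactly one bracket with span `(0, n)`
(uniqueness follows from distinctness of spans). -/
structure IsGold (n : ℕ) (tG : Finset (N × ℕ × ℕ)) : Prop where
  validSpans : ∀ b ∈ tG, (span b).1 < (span b).2 ∧ (span b).2 ≤ n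
  distinctSpans : ∀ b₁ ∈ tG, ∀ b₂ ∈ tG, span b₁ = span b₂ → b₁ = b₂
  noncrossing : ∀ b₁ ∈ tG, ∀ b₂ ∈ tG,
    Enc (span b₁) (span b₂) ∨ Enc (span b₂) (span b₁) ∨
    (span b₁).2 ≤ (span b₂).1 ∨ (span b₂).2 ≤ (span b₁).1
  root : ∃ X, (X, 0, n) ∈ tG

open Classical in
/-- `left(c)`: gold brackets (strictly, at even steps) encompassing the top
span whose left boundary occurs on the stack. -/
noncomputable def leftSet (tG : Finset (N × ℕ × ℕ)) (c : Config N) :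
    Finset (N × ℕ × ℕ) :=
  tG.filter fun b =>
    (if Even c.z then SEnc (topI c.σ, topJ c.σ) (span b)
     else Enc (topI c.σ, topJ c.σ) (span b)) ∧ (span b).1 ∈ c.σ

open Classical in
/-- `right(c)`: gold brackets entirely on the queue. -/
noncomputable def rightSet (tG : Finset (N × ℕ × ℕ)) (c : Config N) :
    Finset (N × ℕ × ℕ) :=
  tG.filter fun b => topJ c.σ ≤ (span b).1

open Classical in
/-- `reach(c)`: the reachable gold brackets (all of `t_G` at the initial
configuration, whose stack has fewer than two boundaries). -/
noncomputable def reach (tG : Finset (N × ℕ × ℕ)) (c : Config N) :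
    Finset (N × ℕ × ℕ) :=
  if c.σ.length < 2 then tG else leftSet tG c ∪ rightSet tG c

/-- The optimal tree `t*(c) = t ∪ reach(c)`. -/
noncomputable def tstar (tG : Finset (N × ℕ × ℕ)) (c : Config N) :
    Finset (N × ℕ × ℕ) :=
  c.t ∪ reach tG c

/-- `b = next(c)`: the `≺`-minimal element of `left(c)`. -/
def IsNext (tG : Finset (N × ℕ × ℕ)) (c : Config N) (b : N × ℕ × ℕ) : Prop :=
  b ∈ leftSet tG c ∧ ∀ b' ∈ leftSet tG c, Enc (span b) (span b')

/-- The dynamic-oracle policy `dyna(c)` as a predicate on actions. -/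
def Dyna (tG : Finset (N × ℕ × ℕ)) (c : Config N) (a : Action N) : Prop :=
  if c.σ.length < 2 then a = Action.sh
  else if Even c.z then
    ∃ b, IsNext tG c b ∧
      (((span b).1 = topI c.σ ∧ topJ c.σ < (span b).2 ∧ a = Action.sh) ∨
       ((span b).1 < topI c.σ ∧ (span b).2 = topJ c.σ ∧ a = Action.comb) ∨
       ((span b).1 < topI c.σ ∧ topJ c.σ < (span b).2 ∧
          (a = Action.sh ∨ a = Action.comb)))
  else
    (∃ X, (X, topI c.σ, topJ c.σ) ∈ tG ∧ a = Action.label X) ∨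
    ((∀ X, (X, topI c.σ, topJ c.σ) ∉ tG) ∧ a = Action.nolabel)

/-- `F1` of a predicted bracket set `t'` against the gold tree `tG`
(`0` when `t' ∩ tG = ∅`). -/
noncomputable def f1 (tG t' : Finset (N × ℕ × ℕ)) : ℝ :=
  if t' ∩ tG = ∅ then 0
  else
    (2 * (((t' ∩ tG).card : ℝ) / (tG.card : ℝ)) * (((t' ∩ tG).card : ℝ) / (t'.card : ℝ))) /
      ((((t' ∩ tG).card : ℝ) / (tG.card : ℝ)) + (((t' ∩ tG).card : ℝ) / (t'.card : ℝ)))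

/-- `F1(c)`: the best `F1` among trees reachable from `c`. -/
noncomputable def configF1 (n : ℕ) (tG : Finset (N × ℕ × ℕ)) (c : Config N) : ℝ :=
  sSup (f1 tG '' Dset n c)

/-- A run of (applicable) actions from one configuration to another. -/
inductive Run (n : ℕ) : Config N → List (Action N) → Config N → Prop
  | refl (c : Config N) : Run n c [] c
  | step {c c' : Config N} {as : List (Action N)} (a : Action N)
      (happ : App n c a) (h : Run n (doAct c a) as c') : Run n c (a :: as) c'

/-- A run all of whose actions follow the dynamic oracle. -/
inductive DynaRun (n : ℕ) (tG : Finset (N × ℕ × ℕ)) : Config N → Config N → Prop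
  | refl (c : Config N) : DynaRun n tG c c
  | step {c c' : Config N} (a : Action N) (happ : App n c a) (hdyna : Dyna tG c a)
      (h : DynaRun n tG (doAct c a) c') : DynaRun n tG c c'

def isSh : Action N → Bool
  | .sh => true
  | _ => false

def isComb : Action N → Bool
  | .comb => true
  | _ => false

/-- Label-step actions: `label-X` or `nolabel`. -/
def isLabelStep : Action N → Bool
  | .label _ => true
  | .nolabel => true
  | _ => false

end SpanParser

/-!
Every action prescribed by the dynamic oracle keeps the optimal tree unchanged. At an odd step
the top span is labelled with its gold label, if it has one, which moves that bracket from
`reach` into `t`. At an even step, since gold brackets do not cross, the gold brackets of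
`left(c)` form a chain under `⪯` (nonempty, as the root belongs to it unless the parse is over),
and its least element `next(c)` decides: combine if it ends at the top boundary, shift otherwise.
The step counter obeys `z + 2|σ| + z mod 2 = 4 top(σ) + 2`, so after `4n - 2 - z` such steps the
configuration is final; there `reach` is empty and `t* = t`.
-/

namespace SpanParser

variable {N : Type*}

section Stack

@[simp] lemma topJ_append_singleton (l : List ℕ) (a : ℕ) : topJ (l ++ [a]) = a :=
  List.getLastD_concat

@[simp] lemma topJ_append_pair (l : List ℕ) (a b : ℕ) : topJ (l ++ [a, b]) = b := by
  simpa using topJ_append_singleton (l ++ [a]) b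

@[simp] lemma topI_append_pair (l : List ℕ) (a b : ℕ) : topI (l ++ [a, b]) = a := by
  simp [topI]

@[simp] lemma dropLast_dropLast_append_pair (l : List ℕ) (a b : ℕ) :
    (l ++ [a, b]).dropLast.dropLast = l := by
  simp

lemma exists_eq_append_pair {σ : List ℕ} (h : 2 ≤ σ.length) : ∃ D i j, σ = D ++ [i, j] := by
  rcases σ.eq_nil_or_concat' with rfl | ⟨l, j, rfl⟩
  · simp at h
  rcases l.eq_nil_or_concat' with rfl | ⟨D, i, rfl⟩
  · simp at h
  exact ⟨D, i, j, by simp⟩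

lemma le_topJ {σ : List ℕ} (hσ : σ.Pairwise (· < ·)) {x : ℕ} (hx : x ∈ σ) : x ≤ topJ σ := by
  rcases σ.eq_nil_or_concat' with rfl | ⟨l, a, rfl⟩
  · simp at hx
  rw [List.pairwise_append] at hσ
  rcases List.mem_append.1 hx with hx | hx
  · simpa using (hσ.2.2 x hx a (by simp)).le
  · simp_all

lemma pairwise_lt_append_singleton {l : List ℕ} {a : ℕ} (hl : l.Pairwise (· < ·))
    (ha : ∀ x ∈ l, x < a) : (l ++ [a]).Pairwise (· < ·) :=
  List.pairwise_append.2
    ⟨hl, List.pairwise_singleton _ _, fun x hx _ hy => List.mem_singleton.1 hy ▸ ha x hx⟩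

lemma lt_of_pairwise_append_pair {D : List ℕ} {i j : ℕ} (h : (D ++ [i, j]).Pairwise (· < ·)) :
    (∀ x ∈ D, x < i) ∧ i < j := by
  simp_all [List.pairwise_append]

end Stack

structure Invariant (n : ℕ) (c : Config N) : Prop where
  sorted : c.σ.Pairwise (· < ·)
  head : c.σ.head? = some 0
  topJ_le : topJ c.σ ≤ n
  /-- `topJ c.σ` shifts and `topJ c.σ + 1 - c.σ.length` combines have been made, each followed
  by a label step except possibly the last one. -/
  step_eq : c.z + 2 * c.σ.length + c.z % 2 = 4 * topJ c.σ + 2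

namespace Invariant

variable {n : ℕ} {c : Config N}

lemma eq_singleton_of_length_lt_two (hc : Invariant n c) (h : c.σ.length < 2) :
    c.σ = [0] ∧ c.z = 0 := by
  obtain ⟨z, σ, t⟩ := c
  obtain ⟨-, hhead, -, hstep⟩ := hc
  dsimp only at *
  rcases σ with _ | ⟨a, _ | ⟨b, l⟩⟩
  · simp at hhead
  · obtain rfl : a = 0 := by simpa using hhead
    exact ⟨rfl, by simp only [topJ, List.getLastD_eq_getLast?, List.getLast?_singleton,
      Option.getD_some, List.length_singleton] at hstep; omega⟩
  · simp at h

lemma final_of_le (hc : Invariant n c) (hn : 0 < n) (hz : 4 * n - 2 ≤ c.z) : Final n c := by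
  obtain ⟨z, σ, t⟩ := c
  by_cases hlen : σ.length < 2
  · obtain ⟨rfl, rfl⟩ := hc.eq_singleton_of_length_lt_two hlen
    dsimp only at hz
    omega
  obtain ⟨D, i, j, rfl⟩ := exists_eq_append_pair (not_lt.1 hlen)
  obtain ⟨-, hhead, htop, hstep⟩ := hc
  dsimp only at *
  simp only [topJ_append_pair, List.length_append, List.length_cons, List.length_nil]
    at htop hstep
  obtain rfl : D = [] := List.eq_nil_of_length_eq_zero (by omega)
  obtain rfl : i = 0 := by simpa using hhead
  exact ⟨by simp only [List.nil_append]; congr; omega, by dsimp only at hz ⊢; omega⟩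

end Invariant

lemma IsGold.pos {n : ℕ} {tG : Finset (N × ℕ × ℕ)} (hG : IsGold n tG) : 0 < n := by
  obtain ⟨X, hX⟩ := hG.root
  exact (hG.validSpans _ hX).1

section LeftSet

variable {tG : Finset (N × ℕ × ℕ)}

lemma mem_leftSet_iff {z : ℕ} {D : List ℕ} {i j : ℕ} {t : Finset (N × ℕ × ℕ)} (hij : i < j)
    {X : N} {p q : ℕ} :
    (X, p, q) ∈ leftSet tG ⟨z, D ++ [i, j], t⟩ ↔
      (X, p, q) ∈ tG ∧ p ≤ i ∧ j ≤ q ∧ (Even z → (p, q) ≠ (i, j)) ∧ p ∈ D ++ [i, j] := by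
  simp only [leftSet, Finset.mem_filter, SEnc, Enc, span, topI_append_pair, topJ_append_pair]
  split_ifs <;> grind

lemma mem_and_enc_of_mem_leftSet {c : Config N} {b : N × ℕ × ℕ} (hb : b ∈ leftSet tG c) :
    b ∈ tG ∧ Enc (topI c.σ, topJ c.σ) (span b) := by
  simp only [leftSet, Finset.mem_filter] at hb
  split_ifs at hb
  exacts [⟨hb.1, hb.2.1.1⟩, ⟨hb.1, hb.2.1⟩]

lemma exists_isNext {n : ℕ} (hG : IsGold n tG) {c : Config N}
    (hne : (leftSet tG c).Nonempty) : ∃ b, IsNext tG c b := by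
  obtain ⟨b, hb, hmin⟩ := Finset.exists_min_image _ (fun b => (span b).2 - (span b).1) hne
  refine ⟨b, hb, fun b' hb' => ?_⟩
  obtain ⟨hbG, henc⟩ := mem_and_enc_of_mem_leftSet hb
  obtain ⟨hb'G, henc'⟩ := mem_and_enc_of_mem_leftSet hb'
  have hle := hmin b' hb'
  have hcross := hG.noncrossing b hbG b' hb'G
  simp only [Enc] at henc henc' hle hcross ⊢
  omega

end LeftSet

variable [DecidableEq N]

namespace Invariant

variable {n : ℕ} {c : Config N}

lemma step (hc : Invariant n c) {a : Action N} (ha : App n c a) : Invariant n (doAct c a) := by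
  obtain ⟨z, σ, t⟩ := c
  obtain ⟨hsorted, hhead, htop, hstep⟩ := hc
  dsimp only at hsorted hhead htop hstep
  cases a with
  | sh =>
    obtain ⟨hz, hne, hlt⟩ : Even z ∧ σ ≠ [] ∧ topJ σ < n := ha
    have hz : z % 2 = 0 := Nat.even_iff.1 hz
    refine ⟨pairwise_lt_append_singleton hsorted fun x hx => Nat.lt_succ_of_le (le_topJ hsorted hx),
      (List.head?_append_of_ne_nil _ hne).trans hhead, ?_, ?_⟩ <;>
      simp only [doAct, topJ_append_singleton, List.length_append, List.length_singleton] <;>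
      omega
  | comb =>
    obtain ⟨hz, hlen⟩ : Even z ∧ 3 ≤ σ.length := ha
    have hz : z % 2 = 0 := Nat.even_iff.1 hz
    obtain ⟨D, i, j, rfl⟩ := exists_eq_append_pair (σ := σ) (by omega)
    obtain ⟨hD, hij⟩ := lt_of_pairwise_append_pair hsorted
    have hne : D ≠ [] := by rintro rfl; simp at hlen
    simp only [List.length_append, List.length_cons, List.length_nil, topJ_append_pair]
      at htop hstep
    refine ⟨?_, ?_, ?_, ?_⟩ <;>
      simp only [doAct, dropLast_dropLast_append_pair, topJ_append_pair, topJ_append_singleton]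
    · exact pairwise_lt_append_singleton (List.pairwise_append.1 hsorted).1
        fun x hx => (hD x hx).trans hij
    · rwa [List.head?_append_of_ne_nil _ hne] at hhead ⊢
    · exact htop
    · simp only [List.length_append, List.length_singleton]; omega
  | label X | nolabel =>
    have hz : z % 2 = 1 := Nat.odd_iff.1 ha.1
    exact ⟨hsorted, hhead, htop, by simp only [doAct]; omega⟩

lemma of_valid (hc : Valid n c) : Invariant n c := by
  induction hc with
  | refl => exact ⟨by simp [initial], rfl, by simp [initial, topJ], by simp [initial, topJ]⟩
  | tail _ hstep ih =>
    obtain ⟨a, ha, rfl⟩ := hstep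
    exact ih.step ha

end Invariant

section Reach

variable {n : ℕ} {tG : Finset (N × ℕ × ℕ)} {z : ℕ} {D : List ℕ} {i j : ℕ}
  {t : Finset (N × ℕ × ℕ)}

lemma mem_reach_iff {X : N} {p q : ℕ} :
    (X, p, q) ∈ reach tG ⟨z, D ++ [i, j], t⟩ ↔
      (X, p, q) ∈ leftSet tG ⟨z, D ++ [i, j], t⟩ ∨ ((X, p, q) ∈ tG ∧ j ≤ p) := by
  simp [reach, rightSet, span]

lemma reach_eq_union_filter_of_odd (hij : i < j) (hz : ¬Even z) (t' : Finset (N × ℕ × ℕ)) :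
    reach tG ⟨z, D ++ [i, j], t⟩ =
      reach tG ⟨z + 1, D ++ [i, j], t'⟩ ∪ tG.filter (span · = (i, j)) := by
  ext ⟨X, p, q⟩
  simp only [Finset.mem_union, Finset.mem_filter, mem_reach_iff, mem_leftSet_iff hij,
    Nat.even_add_one, hz]
  simp only [span]
  grind

lemma reach_doAct_sh_singleton (hG : IsGold n tG) (hz : Even z) :
    reach tG (doAct ⟨z, [0], t⟩ .sh) = reach tG ⟨z, [0], t⟩ := by
  have hσ : [0] ++ [topJ [0] + 1] = [] ++ [0, 1] := rfl
  have hinit : reach tG ⟨z, [0], t⟩ = tG := if_pos (by simp)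
  simp only [doAct, hσ, hinit]
  ext ⟨X, p, q⟩
  have hspan := hG.validSpans (X, p, q)
  simp only [mem_reach_iff, mem_leftSet_iff Nat.zero_lt_one, Nat.even_add_one, hz, span]
    at hspan ⊢
  grind

lemma reach_doAct_sh (hG : IsGold n tG) (hσ : (D ++ [i, j]).Pairwise (· < ·)) (hz : Even z)
    (hleft : ∀ b ∈ leftSet tG ⟨z, D ++ [i, j], t⟩, j < (span b).2) :
    reach tG (doAct ⟨z, D ++ [i, j], t⟩ .sh) = reach tG ⟨z, D ++ [i, j], t⟩ := by
  obtain ⟨-, hij⟩ := lt_of_pairwise_append_pair hσ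
  have hσ' : D ++ [i, j] ++ [j + 1] = (D ++ [i]) ++ [j, j + 1] := by simp
  simp only [doAct, topJ_append_pair, hσ']
  ext ⟨X, p, q⟩
  have hleft := fun h => hleft (X, p, q) ((mem_leftSet_iff hij).2 h)
  have hspan := hG.validSpans (X, p, q)
  simp only [mem_reach_iff, mem_leftSet_iff hij, mem_leftSet_iff (Nat.lt_succ_self j),
    Nat.even_add_one, hz, span] at hleft hspan ⊢
  grind

lemma reach_doAct_comb {k : ℕ} (hσ : (D ++ [k] ++ [i, j]).Pairwise (· < ·)) (hz : Even z)
    (hleft : ∀ b ∈ leftSet tG ⟨z, D ++ [k] ++ [i, j], t⟩, (span b).1 < i) :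
    reach tG (doAct ⟨z, D ++ [k] ++ [i, j], t⟩ .comb) =
      reach tG ⟨z, D ++ [k] ++ [i, j], t⟩ := by
  obtain ⟨hD, hij⟩ := lt_of_pairwise_append_pair hσ
  have hki : k < i := hD k (by simp)
  have hDk : ∀ x ∈ D, x < k := by simp_all [List.pairwise_append]
  have hcomb : doAct ⟨z, D ++ [k] ++ [i, j], t⟩ .comb = ⟨z + 1, D ++ [k, j], t⟩ := by
    simp only [doAct, topJ_append_pair, dropLast_dropLast_append_pair]
    simp
  rw [hcomb]
  ext ⟨X, p, q⟩
  have hleft := fun h => hleft (X, p, q) ((mem_leftSet_iff hij).2 h)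
  simp only [mem_reach_iff, mem_leftSet_iff hij, mem_leftSet_iff (hki.trans hij),
    Nat.even_add_one, hz, span] at hleft ⊢
  grind

lemma tstar_doAct_label (hG : IsGold n tG) (hz : ¬Even z) (hij : i < j) {X : N}
    (hX : (X, i, j) ∈ tG) :
    tstar tG (doAct ⟨z, D ++ [i, j], t⟩ (.label X)) = tstar tG ⟨z, D ++ [i, j], t⟩ := by
  have hgold : tG.filter (span · = (i, j)) = {(X, i, j)} := by
    ext b
    simp only [Finset.mem_filter, Finset.mem_singleton]
    exact ⟨fun hb => hG.distinctSpans b hb.1 _ hX hb.2, by rintro rfl; exact ⟨hX, rfl⟩⟩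
  simp only [tstar, doAct, topI_append_pair, topJ_append_pair,
    reach_eq_union_filter_of_odd hij hz (insert (X, i, j) t), hgold]
  ext
  simp only [Finset.mem_union, Finset.mem_insert, Finset.mem_singleton]
  tauto

lemma tstar_doAct_nolabel (hz : ¬Even z) (hij : i < j) (hX : ∀ X, (X, i, j) ∉ tG) :
    tstar tG (doAct ⟨z, D ++ [i, j], t⟩ .nolabel) = tstar tG ⟨z, D ++ [i, j], t⟩ := by
  have hgold : tG.filter (span · = (i, j)) = ∅ :=
    Finset.filter_eq_empty_iff.2 fun ⟨X, _, _⟩ hb hspan => hX X (by simp_all [span])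
  simp only [tstar, doAct, reach_eq_union_filter_of_odd hij hz t, hgold, Finset.union_empty]

lemma reach_eq_empty_of_final (hG : IsGold n tG) {c : Config N} (hc : Final n c) :
    reach tG c = ∅ := by
  obtain ⟨z, σ, t⟩ := c
  obtain ⟨rfl, rfl⟩ := hc
  have hz : Even (4 * n - 2) := ⟨2 * n - 1, by omega⟩
  show reach tG ⟨_, [] ++ [0, n], t⟩ = ∅
  refine Finset.eq_empty_of_forall_notMem fun ⟨X, p, q⟩ hb => ?_
  have hspan := hG.validSpans (X, p, q)
  simp only [mem_reach_iff, mem_leftSet_iff hG.pos, hz, span] at hb hspan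
  grind

end Reach

section Oracle

variable {n : ℕ} {tG : Finset (N × ℕ × ℕ)} {z : ℕ} {D : List ℕ} {i j : ℕ}
  {t : Finset (N × ℕ × ℕ)}

lemma exists_app_tstar_eq_of_singleton (hG : IsGold n tG) (hz : Even z) :
    ∃ a, App n ⟨z, [0], t⟩ a ∧ tstar tG (doAct ⟨z, [0], t⟩ a) = tstar tG ⟨z, [0], t⟩ :=
  ⟨.sh, ⟨hz, List.cons_ne_nil _ _, hG.pos⟩, by
    simp only [tstar, reach_doAct_sh_singleton hG hz]; rfl⟩

lemma exists_app_tstar_eq_of_even (hG : IsGold n tG) (hσ : (D ++ [i, j]).Pairwise (· < ·))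
    (h0 : 0 ∈ D ++ [i, j]) (hj : j ≤ n) (hroot : (i, j) ≠ (0, n)) (hz : Even z) :
    ∃ a, App n ⟨z, D ++ [i, j], t⟩ a ∧
      tstar tG (doAct ⟨z, D ++ [i, j], t⟩ a) = tstar tG ⟨z, D ++ [i, j], t⟩ := by
  obtain ⟨-, hij⟩ := lt_of_pairwise_append_pair hσ
  obtain ⟨X₀, hX₀⟩ := hG.root
  have hne : (leftSet tG ⟨z, D ++ [i, j], t⟩).Nonempty :=
    ⟨_, (mem_leftSet_iff hij).2 ⟨hX₀, Nat.zero_le i, hj, fun _ h => hroot (by simp_all), h0⟩⟩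
  obtain ⟨⟨X, p, q⟩, hb, hmin⟩ := exists_isNext hG hne
  obtain ⟨hbG, hpi, hjq, hpq, hp⟩ := (mem_leftSet_iff hij).1 hb
  have hqn := (hG.validSpans _ hbG).2
  simp only [Enc, span] at hmin hqn
  rcases hjq.lt_or_eq with hjq | rfl
  · refine ⟨.sh, ⟨hz, by simp, by simp only [topJ_append_pair]; omega⟩, ?_⟩
    have hleft : ∀ b ∈ leftSet tG ⟨z, D ++ [i, j], t⟩, j < (span b).2 := fun b hb => by
      have := hmin b hb; simp only [span]; omega
    simp only [tstar, reach_doAct_sh hG hσ hz hleft]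
    rfl
  · have hpi : p < i := by grind
    have hpD : p ∈ D := by grind
    obtain ⟨D, k, rfl⟩ := D.eq_nil_or_concat'.resolve_left (List.ne_nil_of_mem hpD)
    refine ⟨.comb, ⟨hz, by simp⟩, ?_⟩
    have hleft : ∀ b ∈ leftSet tG ⟨z, D ++ [k] ++ [i, j], t⟩, (span b).1 < i := fun b hb => by
      have := hmin b hb; simp only [span]; omega
    simp only [tstar, reach_doAct_comb hσ hz hleft]
    rfl

lemma exists_app_tstar_eq_of_odd (hG : IsGold n tG) (hij : i < j) (hz : ¬Even z)
    (hzn : z < 4 * n - 1) :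
    ∃ a, App n ⟨z, D ++ [i, j], t⟩ a ∧
      tstar tG (doAct ⟨z, D ++ [i, j], t⟩ a) = tstar tG ⟨z, D ++ [i, j], t⟩ := by
  have hz' : Odd z := Nat.not_even_iff_odd.1 hz
  by_cases hX : ∃ X, (X, i, j) ∈ tG
  · obtain ⟨X, hX⟩ := hX
    exact ⟨.label X, ⟨hz', by simp⟩, tstar_doAct_label hG hz hij hX⟩
  · exact ⟨.nolabel, ⟨hz', by simp, hzn⟩, tstar_doAct_nolabel hz hij (not_exists.1 hX)⟩

end Oracle

lemma Dset_doAct_subset {n : ℕ} {c : Config N} {a : Action N} (ha : App n c a) :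
    Dset n (doAct c a) ⊆ Dset n c := fun _ ⟨c', hc', hfin, ht⟩ =>
  ⟨c', .head ⟨a, ha, rfl⟩ hc', hfin, ht⟩

namespace Invariant

variable {n : ℕ} {tG : Finset (N × ℕ × ℕ)} {c : Config N}

lemma exists_app_tstar_eq (hG : IsGold n tG) (hc : Invariant n c) (hz : c.z < 4 * n - 2) :
    ∃ a, App n c a ∧ tstar tG (doAct c a) = tstar tG c := by
  obtain ⟨z, σ, t⟩ := c
  by_cases hlen : σ.length < 2
  · obtain ⟨rfl, rfl⟩ := hc.eq_singleton_of_length_lt_two hlen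
    exact exists_app_tstar_eq_of_singleton hG Even.zero
  obtain ⟨D, i, j, rfl⟩ := exists_eq_append_pair (not_lt.1 hlen)
  obtain ⟨hσ, hhead, htop, hstep⟩ := hc
  obtain ⟨hD, hij⟩ := lt_of_pairwise_append_pair hσ
  dsimp only at hz hσ hhead htop hstep
  simp only [topJ_append_pair, List.length_append, List.length_cons, List.length_nil]
    at htop hstep
  rcases Nat.even_or_odd z with hze | hzo
  · have hroot : (i, j) ≠ (0, n) := by
      rintro ⟨⟩
      obtain rfl : D = [] :=
        List.eq_nil_iff_forall_not_mem.2 fun x hx => by have := hD x hx; omega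
      have := Nat.even_iff.1 hze
      simp only [List.length_nil] at hstep
      omega
    exact exists_app_tstar_eq_of_even hG hσ (List.mem_of_head? hhead) htop hroot hze
  · exact exists_app_tstar_eq_of_odd hG hij (Nat.not_even_iff_odd.2 hzo) (by omega)

lemma tstar_mem_Dset (hG : IsGold n tG) (hc : Invariant n c) : tstar tG c ∈ Dset n c := by
  induction hk : 4 * n - 2 - c.z generalizing c with
  | zero =>
    have hfin := hc.final_of_le hG.pos (by omega)
    refine ⟨c, .refl, hfin, ?_⟩
    simp [tstar, reach_eq_empty_of_final hG hfin]
  | succ k ih =>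
    obtain ⟨a, ha, heq⟩ := hc.exists_app_tstar_eq hG (by omega)
    have hz : (doAct c a).z = c.z + 1 := by cases a <;> rfl
    exact Dset_doAct_subset ha (heq ▸ ih (hc.step ha) (by omega))

end Invariant

theorem tstar_reachable_general (n : ℕ) (tG : Finset (N × ℕ × ℕ))
    (hG : IsGold n tG) (c : Config N) (hc : Valid n c) :
    tstar tG c ∈ Dset n c :=
  (Invariant.of_valid hc).tstar_mem_Dset hG

/-- Lemma 2: for every valid configuration `c`, the optimal tree is
reachable: `t*(c) ∈ D(c)`. -/
theorem tstar_reachable (n : ℕ) (hn : 1 ≤ n) (tG : Finset (N × ℕ × ℕ))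
    (hG : IsGold n tG) (c : Config N) (hc : Valid n c) :
    tstar tG c ∈ Dset n c :=
  tstar_reachable_general n tG hG c hc

end SpanParser
end

section
/- For every valid non-final configuration c, the dynamic-oracle policy coincides with the abstract F1-optimal oracle: dyna(c) = oracle(c), where oracle(c) = { τ | τ is applicable at c and F1(τ(c)) = F1(c) }. (Theorem 2, main result.) -/
/-!
The optimal tree reachable from a valid configuration `c` is `t*(c) = t ∪ reach(c)`: following
`dyna` never changes `t*` and ends in a final configuration whose tree is `t*(c)`, while no action
brings back a gold bracket outside `t*(c)` or removes a wrong bracket of `t`. As `F1` increases with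
the number of correct brackets and decreases with the number of wrong ones, `F1(c) = F1(t*(c))`.
An applicable action outside `dyna(c)` either loses a gold bracket of `t*(c)` (`next(c)` after the
wrong one of `sh`/`comb`, the gold bracket over the top span after `nolabel`) or adds a wrong
bracket (after a wrong `label-X`), so it strictly lowers `F1`.
-/

namespace SpanParser

section Stack

variable {l : List ℕ}

@[simp] lemma topJ_concat (a : ℕ) : topJ (l ++ [a]) = a := by
  simp [topJ]

@[simp] lemma topI_concat (a : ℕ) : topI (l ++ [a]) = topJ l := by
  simp [topI, topJ]

lemma dropLast_append_topJ (h : l ≠ []) : l.dropLast ++ [topJ l] = l := by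
  rw [topJ, List.getLastD_eq_getLast?, List.getLast?_eq_some_getLast h]
  exact List.dropLast_append_getLast h

lemma dropLast_dropLast_append (h : 2 ≤ l.length) :
    l.dropLast.dropLast ++ [topI l, topJ l] = l := by
  have hl : l ≠ [] := List.ne_nil_of_length_pos (by omega)
  have hl' : l.dropLast ≠ [] :=
    List.ne_nil_of_length_pos (by simp only [List.length_dropLast]; omega)
  conv_rhs => rw [← dropLast_append_topJ hl, ← dropLast_append_topJ hl']
  simp only [List.append_assoc, List.singleton_append]
  rfl

lemma mem_iff_of_two_le_length (h : 2 ≤ l.length) {x : ℕ} :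
    x ∈ l ↔ x ∈ l.dropLast.dropLast ∨ x = topI l ∨ x = topJ l := by
  conv_lhs => rw [← dropLast_dropLast_append h]
  simp

lemma topI_mem (h : 2 ≤ l.length) : topI l ∈ l :=
  (mem_iff_of_two_le_length h).2 (Or.inr (Or.inl rfl))

lemma topJ_mem (h : l ≠ []) : topJ l ∈ l := by
  rw [← dropLast_append_topJ h]
  simp

variable (hs : l.Pairwise (· < ·))
include hs

lemma le_topJ_s7 {x : ℕ} (hx : x ∈ l) : x ≤ topJ l := by
  have hl : l ≠ [] := List.ne_nil_of_mem hx
  rw [← dropLast_append_topJ hl] at hs hx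
  rcases List.mem_append.1 hx with h | h
  · exact (List.pairwise_append.1 hs).2.2 x h _ (List.mem_singleton_self _) |>.le
  · exact (List.mem_singleton.1 h).le

variable (h : 2 ≤ l.length)
include h

lemma topI_lt_topJ : topI l < topJ l := by
  rw [← dropLast_dropLast_append h] at hs
  exact List.pairwise_pair.1 (List.pairwise_append.1 hs).2.1

lemma lt_topI_of_mem_dropLast_dropLast {x : ℕ} (hx : x ∈ l.dropLast.dropLast) : x < topI l := by
  rw [← dropLast_dropLast_append h, List.pairwise_append] at hs
  exact hs.2.2 x hx _ (by simp)

lemma le_topI {x : ℕ} (hx : x ∈ l) (hxj : x < topJ l) : x ≤ topI l := by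
  rcases (mem_iff_of_two_le_length h).1 hx with hx | rfl | rfl
  · exact (lt_topI_of_mem_dropLast_dropLast hs h hx).le
  · exact le_rfl
  · omega

lemma three_le_length {x : ℕ} (hx : x ∈ l) (hxi : x < topI l) : 3 ≤ l.length := by
  have hd : l.dropLast.dropLast ≠ [] := by
    rcases (mem_iff_of_two_le_length h).1 hx with hx | rfl | rfl
    · exact List.ne_nil_of_mem hx
    · omega
    · have := topI_lt_topJ hs h; omega
  have := List.length_pos_iff.2 hd
  simp only [List.length_dropLast] at this
  omega

end Stack

variable {N : Type*}

@[simp] lemma span_mk (X : N) (p q : ℕ) : span (X, p, q) = (p, q) := rfl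

lemma Enc.antisymm {s₁ s₂ : ℕ × ℕ} (h₁ : Enc s₁ s₂) (h₂ : Enc s₂ s₁) : s₁ = s₂ :=
  Prod.ext (le_antisymm h₂.1 h₁.1) (le_antisymm h₁.2.2 h₂.2.2)

lemma IsGold.one_le {n : ℕ} {tG : Finset (N × ℕ × ℕ)} (hG : IsGold n tG) : 1 ≤ n := by
  obtain ⟨X, hX⟩ := hG.root
  exact (hG.validSpans _ hX).1

/-- Invariant of valid configurations. `z_add` holds as `sh` adds `3` to `z + 2 |σ|` and `4` to
`4 · topJ σ`, `comb` subtracts `1` from `z + 2 |σ|`, a labelling step adds `1` to it, and the parity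
term absorbs the difference; `t_le` is strict at odd steps because the top span is labelled only by
the next action. -/
structure Inv (n : ℕ) (c : Config N) : Prop where
  zero_mem : 0 ∈ c.σ
  sorted : c.σ.Pairwise (· < ·)
  topJ_le : topJ c.σ ≤ n
  z_add : c.z + 2 * c.σ.length = 4 * topJ c.σ + if Even c.z then 2 else 1
  t_lt : ∀ b ∈ c.t, (span b).1 < (span b).2
  t_le : ∀ b ∈ c.t, (span b).2 ≤ topJ c.σ ∧ ((span b).2 = topJ c.σ →
    if Even c.z then topI c.σ ≤ (span b).1 else topI c.σ < (span b).1)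

namespace Inv

variable {n : ℕ} {c : Config N} (hI : Inv n c)
include hI

lemma σ_ne_nil : c.σ ≠ [] := List.ne_nil_of_mem hI.zero_mem

lemma eq_initial (hL : c.σ.length < 2) : c = initial N := by
  have h1 : c.σ.length = 1 := by have := List.length_pos_iff.2 hI.σ_ne_nil; omega
  obtain ⟨a, ha⟩ := List.length_eq_one_iff.1 h1
  have hσ : c.σ = [0] := by simpa [ha, eq_comm] using hI.zero_mem
  have hj : topJ c.σ = 0 := by rw [hσ]; rfl
  have hz : c.z = 0 := by
    have := hI.z_add
    rw [hj, h1] at this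
    split_ifs at this <;> omega
  have ht : c.t = ∅ := Finset.eq_empty_of_forall_notMem fun b hb => by
    have := hI.t_lt b hb
    have := (hI.t_le b hb).1
    omega
  cases c
  simp_all [initial]

lemma two_le_length_of_odd (ho : ¬ Even c.z) : 2 ≤ c.σ.length := by
  by_contra hL
  exact ho (by rw [hI.eq_initial (by omega)]; exact Even.zero)

lemma z_lt (hn : 1 ≤ n) : c.z < 4 * n := by
  by_cases hL : 2 ≤ c.σ.length
  · have := hI.z_add
    have := hI.topJ_le
    split_ifs at * <;> omega
  · rw [hI.eq_initial (by omega)]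
    exact Nat.mul_pos (by norm_num) hn

lemma z_lt_of_odd (ho : ¬ Even c.z) : c.z < 4 * n - 1 := by
  have := hI.z_add
  have := hI.topJ_le
  have := hI.two_le_length_of_odd ho
  rw [if_neg ho] at *
  omega

lemma final_of_span_eq (he : Even c.z) (hL : 2 ≤ c.σ.length) (hi : topI c.σ = 0)
    (hj : topJ c.σ = n) : Final n c := by
  have hd : c.σ.dropLast.dropLast = [] := List.eq_nil_iff_forall_not_mem.2 fun x hx =>
    by have := lt_topI_of_mem_dropLast_dropLast hI.sorted hL hx; omega
  have hσ : c.σ = [0, n] := by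
    rw [← dropLast_dropLast_append hL, hd, hi, hj]; rfl
  have hlen : c.σ.length = 2 := by rw [hσ]; rfl
  have := hI.z_add
  rw [if_pos he, hlen, hj] at this
  exact ⟨hσ, by omega⟩

lemma succ_of_odd (ho : ¬ Even c.z) {t' : Finset (N × ℕ × ℕ)}
    (ht : ∀ b ∈ t', b ∈ c.t ∨ span b = (topI c.σ, topJ c.σ)) : Inv n ⟨c.z + 1, c.σ, t'⟩ where
  zero_mem := hI.zero_mem
  sorted := hI.sorted
  topJ_le := hI.topJ_le
  z_add := by
    have := hI.z_add
    simp only [Nat.even_add_one, ho, if_true, not_false_eq_true, if_false] at this ⊢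
    omega
  t_lt b hb := by
    rcases ht b hb with hb | hb
    · exact hI.t_lt b hb
    · rw [hb]; exact topI_lt_topJ hI.sorted (hI.two_le_length_of_odd ho)
  t_le b hb := by
    simp only [Nat.even_add_one, ho, not_false_eq_true, if_true]
    rcases ht b hb with hb | hb
    · have := hI.t_le b hb
      rw [if_neg ho] at this
      omega
    · simp [hb]

lemma top_not_mem_t (ho : ¬ Even c.z) (X : N) :
    (X, topI c.σ, topJ c.σ) ∉ c.t := fun h => by
  simpa [ho] using (hI.t_le _ h).2

end Inv

section Oracle

variable {n : ℕ} {tG : Finset (N × ℕ × ℕ)} {c : Config N}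

lemma mem_leftSet_iff_s7 (hij : topI c.σ < topJ c.σ) {b : N × ℕ × ℕ} :
    b ∈ leftSet tG c ↔ b ∈ tG ∧ (span b).1 ∈ c.σ ∧ (span b).1 ≤ topI c.σ ∧
      topJ c.σ ≤ (span b).2 ∧ (Even c.z → span b ≠ (topI c.σ, topJ c.σ)) := by
  by_cases he : Even c.z <;>
    simp only [leftSet, Finset.mem_filter, he, if_true, if_false, SEnc, Enc, hij, true_and, ne_eq,
      forall_const, IsEmpty.forall_iff, and_true, and_congr_right_iff] <;> tauto

lemma IsNext.mem {b : N × ℕ × ℕ} (hb : IsNext tG c b) : b ∈ tG := by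
  classical exact (Finset.mem_filter.1 hb.1).1

lemma IsNext.span_eq {b b' : N × ℕ × ℕ} (hb : IsNext tG c b) (hb' : IsNext tG c b') :
    span b = span b' :=
  Enc.antisymm (hb.2 _ hb'.1) (hb'.2 _ hb.1)

lemma IsNext.bounds_of_even (hI : Inv n c) (hL : 2 ≤ c.σ.length) (he : Even c.z)
    {b : N × ℕ × ℕ} (hb : IsNext tG c b) :
    (span b).1 ∈ c.σ ∧ (span b).1 ≤ topI c.σ ∧ topJ c.σ ≤ (span b).2 ∧
      span b ≠ (topI c.σ, topJ c.σ) := by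
  obtain ⟨-, h⟩ := (mem_leftSet_iff_s7 (topI_lt_topJ hI.sorted hL)).1 hb.1
  exact ⟨h.1, h.2.1, h.2.2.1, h.2.2.2 he⟩

lemma root_mem_leftSet (hI : Inv n c) (hL : 2 ≤ c.σ.length) (hnf : ¬ Final n c) {X : N}
    (hX : (X, 0, n) ∈ tG) : (X, 0, n) ∈ leftSet tG c := by
  refine (mem_leftSet_iff_s7 (topI_lt_topJ hI.sorted hL)).2
    ⟨hX, hI.zero_mem, Nat.zero_le _, hI.topJ_le, fun he h => ?_⟩
  simp only [span_mk, Prod.mk.injEq] at h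
  exact hnf (hI.final_of_span_eq he hL h.1.symm h.2.symm)

/-- The narrowest bracket of `left(c)`, which contains the root, is encompassed by all others,
as gold spans do not cross. -/
lemma exists_isNext_s7 (hI : Inv n c) (hG : IsGold n tG) (hL : 2 ≤ c.σ.length)
    (hnf : ¬ Final n c) : ∃ b, IsNext tG c b := by
  have hij := topI_lt_topJ hI.sorted hL
  obtain ⟨X, hX⟩ := hG.root
  have hroot := root_mem_leftSet hI hL hnf hX
  obtain ⟨b, hb, hmin⟩ := Finset.exists_min_image (leftSet tG c)
    (fun b => (span b).2 - (span b).1) ⟨_, hroot⟩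
  refine ⟨b, hb, fun b' hb' => ?_⟩
  have hw := hmin b' hb'
  obtain ⟨hbG, -, hbi, hbj, -⟩ := (mem_leftSet_iff_s7 hij).1 hb
  obtain ⟨hb'G, -, hb'i, hb'j, -⟩ := (mem_leftSet_iff_s7 hij).1 hb'
  rcases hG.noncrossing b hbG b' hb'G with h | h | h | h
  · exact h
  all_goals
    obtain ⟨Y, p, q⟩ := b
    obtain ⟨Y', p', q'⟩ := b'
    simp only [span_mk, Enc] at *
    omega

lemma dyna_iff_of_length_lt_two (hL : c.σ.length < 2) {a : Action N} : Dyna tG c a ↔ a = .sh := by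
  rw [Dyna, if_pos hL]

lemma dyna_iff_of_isNext (hI : Inv n c) (hL : 2 ≤ c.σ.length) (he : Even c.z)
    {b : N × ℕ × ℕ} (hb : IsNext tG c b) {a : Action N} :
    Dyna tG c a ↔ a = .sh ∧ topJ c.σ < (span b).2 ∨ a = .comb ∧ (span b).1 < topI c.σ := by
  have hb' := hb.bounds_of_even hI hL he
  rw [Dyna, if_neg (by omega), if_pos he]
  constructor
  · rintro ⟨b', hnext, h⟩
    rw [← hb.span_eq hnext] at h
    rcases h with ⟨-, h, rfl⟩ | ⟨h, -, rfl⟩ | ⟨hp, hq, rfl | rfl⟩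
    exacts [Or.inl ⟨rfl, h⟩, Or.inr ⟨rfl, h⟩, Or.inl ⟨rfl, hq⟩, Or.inr ⟨rfl, hp⟩]
  · refine fun h => ⟨b, hb, ?_⟩
    obtain ⟨Y, p, q⟩ := b
    simp only [span_mk, ne_eq, Prod.mk.injEq] at hb' h ⊢
    rcases h with ⟨rfl, hq⟩ | ⟨rfl, hp⟩
    · by_cases hp : p = topI c.σ
      exacts [Or.inl ⟨hp, hq, rfl⟩, Or.inr (Or.inr ⟨by omega, hq, Or.inl rfl⟩)]
    · by_cases hq : q = topJ c.σ
      exacts [Or.inr (Or.inl ⟨hp, hq, rfl⟩), Or.inr (Or.inr ⟨hp, by omega, Or.inr rfl⟩)]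

lemma dyna_iff_of_odd (hL : 2 ≤ c.σ.length) (ho : ¬ Even c.z) {a : Action N} :
    Dyna tG c a ↔ (∃ X, (X, topI c.σ, topJ c.σ) ∈ tG ∧ a = .label X) ∨
      (∀ X, (X, topI c.σ, topJ c.σ) ∉ tG) ∧ a = .nolabel := by
  rw [Dyna, if_neg (by omega), if_neg ho]

lemma not_final_of_app {a : Action N} (ha : App n c a) : ¬ Final n c := by
  rintro ⟨hσ, hz⟩
  have he : Even c.z := ⟨2 * n - 1, by omega⟩
  cases a with
  | sh => simp [App, hσ, topJ] at ha
  | comb => simp [App, hσ] at ha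
  | label => exact Nat.not_odd_iff_even.2 he ha.1
  | nolabel => exact Nat.not_odd_iff_even.2 he ha.1

lemma app_of_dyna (hI : Inv n c) (hG : IsGold n tG) {a : Action N} (hd : Dyna tG c a) :
    App n c a := by
  by_cases hL : c.σ.length < 2
  · obtain rfl := hI.eq_initial hL
    obtain rfl := (dyna_iff_of_length_lt_two hL).1 hd
    exact ⟨Even.zero, by simp [initial], hG.one_le⟩
  replace hL : 2 ≤ c.σ.length := by omega
  by_cases he : Even c.z
  · obtain ⟨b, hb⟩ : ∃ b, IsNext tG c b := by
      rw [Dyna, if_neg (by omega), if_pos he] at hd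
      exact hd.imp fun _ h => h.1
    have hbσ := (hb.bounds_of_even hI hL he).1
    rcases (dyna_iff_of_isNext hI hL he hb).1 hd with ⟨rfl, hq⟩ | ⟨rfl, hp⟩
    · exact ⟨he, hI.σ_ne_nil, hq.trans_le (hG.validSpans b hb.mem).2⟩
    · exact ⟨he, three_le_length hI.sorted hL hbσ hp⟩
  · have ho := Nat.not_even_iff_odd.1 he
    rcases (dyna_iff_of_odd hL he).1 hd with ⟨X, -, rfl⟩ | ⟨-, rfl⟩
    exacts [⟨ho, hL⟩, ⟨ho, hL, hI.z_lt_of_odd he⟩]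

lemma exists_dyna (hI : Inv n c) (hG : IsGold n tG) (hnf : ¬ Final n c) :
    ∃ a, Dyna tG c a := by
  by_cases hL : c.σ.length < 2
  · exact ⟨.sh, (dyna_iff_of_length_lt_two hL).2 rfl⟩
  replace hL : 2 ≤ c.σ.length := by omega
  by_cases he : Even c.z
  · obtain ⟨b, hb⟩ := exists_isNext_s7 hI hG hL hnf
    obtain ⟨-, hpi, hjq, hne⟩ := hb.bounds_of_even hI hL he
    by_cases hq : topJ c.σ < (span b).2
    · exact ⟨.sh, (dyna_iff_of_isNext hI hL he hb).2 (Or.inl ⟨rfl, hq⟩)⟩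
    · refine ⟨.comb, (dyna_iff_of_isNext hI hL he hb).2 (Or.inr ⟨rfl, ?_⟩)⟩
      obtain ⟨Y, p, q⟩ := b
      simp only [span_mk, ne_eq, Prod.mk.injEq] at *
      omega
  · by_cases hgold : ∃ X, (X, topI c.σ, topJ c.σ) ∈ tG
    · obtain ⟨X, hX⟩ := hgold
      exact ⟨.label X, (dyna_iff_of_odd hL he).2 (Or.inl ⟨X, hX, rfl⟩)⟩
    · exact ⟨.nolabel, (dyna_iff_of_odd hL he).2 (Or.inr ⟨not_exists.1 hgold, rfl⟩)⟩

end Oracle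

variable [DecidableEq N]

section Step

variable {n : ℕ} {c : Config N}

@[simp] lemma doAct_z (c : Config N) (a : Action N) : (doAct c a).z = c.z + 1 := by
  cases a <;> rfl

lemma t_subset_doAct (c : Config N) (a : Action N) : c.t ⊆ (doAct c a).t := by
  cases a <;> simp [doAct, Finset.subset_insert]

lemma doAct_comb_σ_sublist (hL : 2 ≤ c.σ.length) : (doAct c .comb).σ.Sublist c.σ := by
  conv_rhs => rw [← dropLast_dropLast_append hL]
  exact (List.Sublist.cons _ (List.Sublist.refl _)).append_left _

lemma mem_doAct_comb_σ (hs : c.σ.Pairwise (· < ·)) (hL : 2 ≤ c.σ.length) {x : ℕ} :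
    x ∈ (doAct c .comb).σ ↔ x ∈ c.σ ∧ x ≠ topI c.σ := by
  simp only [doAct, List.mem_append, List.mem_singleton, mem_iff_of_two_le_length hL]
  have hij := topI_lt_topJ hs hL
  constructor
  · rintro (hx | rfl)
    · exact ⟨Or.inl hx, (lt_topI_of_mem_dropLast_dropLast hs hL hx).ne⟩
    · exact ⟨Or.inr (Or.inr rfl), hij.ne'⟩
  · rintro ⟨hx | rfl | rfl, hne⟩
    exacts [Or.inl hx, absurd rfl hne, Or.inr rfl]

lemma topI_doAct_comb_lt (hs : c.σ.Pairwise (· < ·)) (hL : 3 ≤ c.σ.length) :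
    topI (doAct c .comb).σ < topI c.σ := by
  have hd : c.σ.dropLast.dropLast ≠ [] :=
    List.ne_nil_of_length_pos (by simp only [List.length_dropLast]; omega)
  simpa [doAct] using lt_topI_of_mem_dropLast_dropLast hs (by omega) (topJ_mem hd)

namespace Inv

variable (hI : Inv n c)
include hI

lemma doAct_sh (he : Even c.z) (hj : topJ c.σ < n) : Inv n (doAct c .sh) where
  zero_mem := List.mem_append_left _ hI.zero_mem
  sorted := List.pairwise_append.2 ⟨hI.sorted, List.pairwise_singleton _ _, fun x hx y hy => by
    rw [List.mem_singleton.1 hy]; exact Nat.lt_succ_of_le (le_topJ_s7 hI.sorted hx)⟩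
  topJ_le := by simpa [doAct] using hj
  z_add := by
    have := hI.z_add
    simp only [doAct, Nat.even_add_one, he, if_true, not_true, if_false, topJ_concat,
      List.length_append, List.length_singleton] at this ⊢
    omega
  t_lt := hI.t_lt
  t_le b hb := by
    have := (hI.t_le b hb).1
    simp only [doAct, topJ_concat]
    omega

lemma doAct_comb (he : Even c.z) (hL : 3 ≤ c.σ.length) : Inv n (doAct c .comb) where
  zero_mem := (mem_doAct_comb_σ hI.sorted (by omega)).2
    ⟨hI.zero_mem, (Nat.zero_lt_of_lt (topI_doAct_comb_lt hI.sorted hL)).ne⟩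
  sorted := hI.sorted.sublist (doAct_comb_σ_sublist (c := c) (by omega))
  topJ_le := by simpa [doAct] using hI.topJ_le
  z_add := by
    have := hI.z_add
    simp only [doAct, Nat.even_add_one, he, if_true, not_true, if_false, topJ_concat,
      List.length_append, List.length_singleton, List.length_dropLast] at this ⊢
    omega
  t_lt := hI.t_lt
  t_le b hb := by
    have := hI.t_le b hb
    have := topI_doAct_comb_lt hI.sorted hL
    simp only [doAct, topJ_concat, Nat.even_add_one, he, if_true, not_true, if_false] at *
    omega

lemma doAct {a : Action N} (ha : App n c a) : Inv n (doAct c a) := by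
  cases a with
  | sh => exact hI.doAct_sh ha.1 ha.2.2
  | comb => exact hI.doAct_comb ha.1 ha.2
  | label X =>
    refine hI.succ_of_odd (Nat.not_even_iff_odd.2 ha.1) fun b hb => ?_
    rcases Finset.mem_insert.1 hb with rfl | hb
    exacts [Or.inr rfl, Or.inl hb]
  | nolabel => exact hI.succ_of_odd (Nat.not_even_iff_odd.2 ha.1) fun b hb => Or.inl hb

lemma of_reaches {c' : Config N} (h : Reaches n c c') : Inv n c' := by
  induction h with
  | refl => exact hI
  | tail _ hstep ih =>
    obtain ⟨a, ha, rfl⟩ := hstep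
    exact ih.doAct ha

end Inv

lemma Inv.of_valid (hc : Valid n c) : Inv n c := by
  refine Inv.of_reaches ⟨by simp [initial], by simp [initial], Nat.zero_le _, ?_, ?_, ?_⟩ hc <;>
    simp [initial, topJ]

end Step

section Reach

variable {n : ℕ} {tG : Finset (N × ℕ × ℕ)} {c : Config N}

lemma reach_subset (tG : Finset (N × ℕ × ℕ)) (c : Config N) : reach tG c ⊆ tG := by
  classical
  unfold reach
  split_ifs
  · exact subset_rfl
  · exact Finset.union_subset (Finset.filter_subset _ _) (Finset.filter_subset _ _)

lemma reach_of_length_lt_two (hL : c.σ.length < 2) : reach tG c = tG := if_pos hL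

lemma mem_reach_iff_s7 (hL : 2 ≤ c.σ.length) {b : N × ℕ × ℕ} :
    b ∈ reach tG c ↔ b ∈ leftSet tG c ∨ b ∈ tG ∧ topJ c.σ ≤ (span b).1 := by
  simp [reach, rightSet, show ¬ c.σ.length < 2 by omega]

lemma leftSet_subset_reach (hL : 2 ≤ c.σ.length) : leftSet tG c ⊆ reach tG c :=
  fun _ hb => (mem_reach_iff_s7 hL).2 (Or.inl hb)

lemma not_mem_reach_of_mem_t (hI : Inv n c) {b : N × ℕ × ℕ} (hb : b ∈ c.t) :
    b ∉ reach tG c := by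
  by_cases hL : c.σ.length < 2
  · simp [hI.eq_initial hL, initial] at hb
  have hij := topI_lt_topJ hI.sorted (by omega)
  have hlt := hI.t_lt b hb
  have hle := hI.t_le b hb
  rw [mem_reach_iff_s7 (by omega), mem_leftSet_iff_s7 hij]
  obtain ⟨Y, p, q⟩ := b
  simp only [span_mk, ne_eq, Prod.mk.injEq] at *
  rintro (⟨-, -, hpi, hjq, hne⟩ | ⟨-, hjp⟩)
  · split_ifs at hle with he
    exacts [hne he ⟨by omega, by omega⟩, by omega]
  · omega

lemma mem_reach_succ_of_odd (hI : Inv n c) (ho : ¬ Even c.z) {c' : Config N}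
    (hσ : c'.σ = c.σ) (hz : c'.z = c.z + 1) {b : N × ℕ × ℕ} :
    b ∈ reach tG c' ↔ b ∈ reach tG c ∧ span b ≠ (topI c.σ, topJ c.σ) := by
  have hL := hI.two_le_length_of_odd ho
  have hij := topI_lt_topJ hI.sorted hL
  rw [mem_reach_iff_s7 (hσ ▸ hL), mem_reach_iff_s7 hL, mem_leftSet_iff_s7 (hσ ▸ hij), mem_leftSet_iff_s7 hij,
    hσ, hz]
  obtain ⟨Y, p, q⟩ := b
  simp only [span_mk, ne_eq, Prod.mk.injEq, Nat.even_add_one, ho, not_false_eq_true,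
    forall_const, false_implies, and_true]
  constructor
  · rintro (⟨hbG, hpσ, hpi, hjq, hne⟩ | ⟨hbG, hjp⟩)
    · exact ⟨Or.inl ⟨hbG, hpσ, hpi, hjq⟩, hne⟩
    · exact ⟨Or.inr ⟨hbG, hjp⟩, by omega⟩
  · rintro ⟨h | h, hne⟩
    exacts [Or.inl ⟨h.1, h.2.1, h.2.2.1, h.2.2.2, hne⟩, Or.inr h]

lemma mem_reach_doAct_sh (hI : Inv n c) (hG : IsGold n tG) (he : Even c.z)
    (hL : 2 ≤ c.σ.length) {b : N × ℕ × ℕ} :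
    b ∈ reach tG (doAct c .sh) ↔
      b ∈ reach tG c ∧ (b ∈ leftSet tG c → topJ c.σ < (span b).2) := by
  have hij := topI_lt_topJ hI.sorted hL
  have hL' : 2 ≤ (doAct c .sh).σ.length := by
    simp only [doAct, List.length_append, List.length_singleton]; omega
  rw [mem_reach_iff_s7 hL', mem_reach_iff_s7 hL, mem_leftSet_iff_s7 (by simp [doAct]), mem_leftSet_iff_s7 hij]
  obtain ⟨Y, p, q⟩ := b
  simp only [doAct, topI_concat, topJ_concat, List.mem_append, List.mem_singleton, span_mk, ne_eq,
    Prod.mk.injEq, Nat.even_add_one, he, not_true_eq_false, false_implies, and_true,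
    forall_const]
  constructor
  · rintro (⟨hbG, hpσ | rfl, hpj, hjq⟩ | ⟨hbG, hjp⟩)
    · refine ⟨?_, fun _ => by omega⟩
      rcases hpj.lt_or_eq with hpj | rfl
      · exact Or.inl ⟨hbG, hpσ, le_topI hI.sorted hL hpσ hpj, by omega, by omega⟩
      · exact Or.inr ⟨hbG, le_rfl⟩
    · omega
    · exact ⟨Or.inr ⟨hbG, by omega⟩, fun h => by omega⟩
  · rintro ⟨⟨hbG, hpσ, hpi, hjq, hne⟩ | ⟨hbG, hjp⟩, hleft⟩
    · have := hleft ⟨hbG, hpσ, hpi, hjq, hne⟩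
      exact Or.inl ⟨hbG, Or.inl hpσ, by omega, by omega⟩
    · rcases hjp.lt_or_eq with hjp | rfl
      · exact Or.inr ⟨hbG, hjp⟩
      · exact Or.inl ⟨hbG, Or.inl (topJ_mem hI.σ_ne_nil), le_rfl, (hG.validSpans _ hbG).1⟩

lemma mem_reach_doAct_comb (hI : Inv n c) (he : Even c.z) (hL : 3 ≤ c.σ.length)
    {b : N × ℕ × ℕ} :
    b ∈ reach tG (doAct c .comb) ↔
      b ∈ reach tG c ∧ (b ∈ leftSet tG c → (span b).1 < topI c.σ) := by
  have hI' := hI.doAct_comb he hL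
  have hL' : 2 ≤ (doAct c .comb).σ.length := by
    simp only [doAct, List.length_append, List.length_dropLast, List.length_singleton]; omega
  have hij := topI_lt_topJ hI.sorted (by omega)
  have hki := topI_doAct_comb_lt hI.sorted hL
  have hj' : topJ (doAct c .comb).σ = topJ c.σ := by simp [doAct]
  have hmem {x : ℕ} := mem_doAct_comb_σ hI.sorted (c := c) (x := x) (by omega)
  rw [mem_reach_iff_s7 hL', mem_reach_iff_s7 (by omega), mem_leftSet_iff_s7 (topI_lt_topJ hI'.sorted hL'),
    mem_leftSet_iff_s7 hij, hmem, hj']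
  obtain ⟨Y, p, q⟩ := b
  simp only [span_mk, ne_eq, Prod.mk.injEq, doAct_z, Nat.even_add_one, he, not_true_eq_false,
    false_implies, and_true]
  constructor
  · rintro (⟨hbG, ⟨hpσ, hpi⟩, hpk, hjq⟩ | ⟨hbG, hjp⟩)
    · exact ⟨Or.inl ⟨hbG, hpσ, by omega, hjq, by omega⟩, fun _ => by omega⟩
    · exact ⟨Or.inr ⟨hbG, hjp⟩, fun h => by omega⟩
  · rintro ⟨⟨hbG, hpσ, hpi, hjq, hne⟩ | ⟨hbG, hjp⟩, hleft⟩
    · have hp := hleft ⟨hbG, hpσ, hpi, hjq, hne⟩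
      refine Or.inl ⟨hbG, ⟨hpσ, by omega⟩, ?_, hjq⟩
      exact le_topI hI'.sorted hL' (hmem.2 ⟨hpσ, by omega⟩) (by omega)
    · exact Or.inr ⟨hbG, hjp⟩

end Reach

section Tstar

variable {n : ℕ} {tG : Finset (N × ℕ × ℕ)} {c : Config N}

lemma reach_doAct_sh_initial (hG : IsGold n tG) : reach tG (doAct (initial N) .sh) = tG := by
  have hσ : (doAct (initial N) .sh).σ = [0, 1] := rfl
  have hi : topI [0, 1] = 0 := rfl
  have hj : topJ [0, 1] = 1 := rfl
  refine Finset.Subset.antisymm (reach_subset _ _) fun b hb => ?_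
  rw [mem_reach_iff_s7 (by simp [hσ]), mem_leftSet_iff_s7 (by simp [hσ, hi, hj]), hσ, hi, hj]
  have hpq := (hG.validSpans b hb).1
  by_cases hp : (span b).1 = 0
  · exact Or.inl ⟨hb, by simp [hp], hp.le, by omega, fun h => absurd h (by simp [doAct, initial])⟩
  · exact Or.inr ⟨hb, by omega⟩

lemma top_mem_reach (hI : Inv n c) (ho : ¬ Even c.z) {X : N}
    (hX : (X, topI c.σ, topJ c.σ) ∈ tG) : (X, topI c.σ, topJ c.σ) ∈ reach tG c := by
  have hL := hI.two_le_length_of_odd ho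
  refine leftSet_subset_reach hL ((mem_leftSet_iff_s7 (topI_lt_topJ hI.sorted hL)).2 ?_)
  exact ⟨hX, topI_mem hL, le_rfl, le_rfl, fun he => absurd he ho⟩

lemma reach_doAct_sh_of_isNext (hI : Inv n c) (hG : IsGold n tG) (he : Even c.z)
    (hL : 2 ≤ c.σ.length) {b : N × ℕ × ℕ} (hb : IsNext tG c b) (hq : topJ c.σ < (span b).2) :
    reach tG (doAct c .sh) = reach tG c :=
  Finset.ext fun _ => (mem_reach_doAct_sh hI hG he hL).trans
    (and_iff_left_of_imp fun _ hb' => hq.trans_le (hb.2 _ hb').2.2)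

lemma reach_doAct_comb_of_isNext (hI : Inv n c) (he : Even c.z) (hL : 3 ≤ c.σ.length)
    {b : N × ℕ × ℕ} (hb : IsNext tG c b) (hp : (span b).1 < topI c.σ) :
    reach tG (doAct c .comb) = reach tG c :=
  Finset.ext fun _ => (mem_reach_doAct_comb hI he hL).trans
    (and_iff_left_of_imp fun _ hb' => (hb.2 _ hb').1.trans_lt hp)

lemma reach_doAct_nolabel (hI : Inv n c) (ho : ¬ Even c.z)
    (hno : ∀ X, (X, topI c.σ, topJ c.σ) ∉ tG) : reach tG (doAct c .nolabel) = reach tG c := by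
  ext ⟨Y, p, q⟩
  rw [mem_reach_succ_of_odd hI ho (c' := doAct c .nolabel) rfl rfl, and_iff_left_iff_imp]
  intro hb hspan
  simp only [span_mk, Prod.mk.injEq] at hspan
  obtain ⟨rfl, rfl⟩ := hspan
  exact hno Y (reach_subset tG c hb)

lemma tstar_doAct_label_s7 (hI : Inv n c) (hG : IsGold n tG) (ho : ¬ Even c.z) {X : N}
    (hX : (X, topI c.σ, topJ c.σ) ∈ tG) : tstar tG (doAct c (.label X)) = tstar tG c := by
  ext b
  have hreach := mem_reach_succ_of_odd (tG := tG) (b := b) hI ho (c' := doAct c (.label X)) rfl rfl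
  simp only [tstar, Finset.mem_union, hreach]
  simp only [doAct, Finset.mem_insert]
  constructor
  · rintro ((rfl | hb) | ⟨hb, -⟩)
    exacts [Or.inr (top_mem_reach hI ho hX), Or.inl hb, Or.inr hb]
  · rintro (hb | hb)
    · exact Or.inl (Or.inr hb)
    · by_cases hspan : span b = (topI c.σ, topJ c.σ)
      · exact Or.inl (Or.inl (hG.distinctSpans _ (reach_subset tG c hb) _ hX hspan))
      · exact Or.inr ⟨hb, hspan⟩

lemma tstar_doAct_of_dyna (hI : Inv n c) (hG : IsGold n tG) {a : Action N} (ha : App n c a)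
    (hd : Dyna tG c a) : tstar tG (doAct c a) = tstar tG c := by
  by_cases hL : c.σ.length < 2
  · obtain rfl := hI.eq_initial hL
    obtain rfl := (dyna_iff_of_length_lt_two hL).1 hd
    rw [tstar, tstar, reach_doAct_sh_initial hG, reach_of_length_lt_two hL]
    rfl
  replace hL : 2 ≤ c.σ.length := by omega
  by_cases he : Even c.z
  · obtain ⟨b, hb⟩ := exists_isNext_s7 hI hG hL (not_final_of_app ha)
    rcases (dyna_iff_of_isNext hI hL he hb).1 hd with ⟨rfl, hq⟩ | ⟨rfl, hp⟩
    · rw [tstar, tstar, reach_doAct_sh_of_isNext hI hG he hL hb hq]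
      rfl
    · rw [tstar, tstar, reach_doAct_comb_of_isNext hI he ha.2 hb hp]
      rfl
  · rcases (dyna_iff_of_odd hL he).1 hd with ⟨X, hX, rfl⟩ | ⟨hno, rfl⟩
    · exact tstar_doAct_label_s7 hI hG he hX
    · rw [tstar, tstar, reach_doAct_nolabel hI he hno]
      rfl

end Tstar

section Monotone

variable {n : ℕ} {tG : Finset (N × ℕ × ℕ)} {c : Config N}

lemma reach_doAct_subset (hI : Inv n c) (hG : IsGold n tG) (hL : 2 ≤ c.σ.length)
    {a : Action N} (ha : App n c a) : reach tG (doAct c a) ⊆ reach tG c := by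
  intro b hb
  cases a with
  | sh => exact ((mem_reach_doAct_sh hI hG ha.1 hL).1 hb).1
  | comb => exact ((mem_reach_doAct_comb hI ha.1 ha.2).1 hb).1
  | label X =>
    exact ((mem_reach_succ_of_odd hI (Nat.not_even_iff_odd.2 ha.1)
      (c' := doAct c (.label X)) rfl rfl).1 hb).1
  | nolabel =>
    exact ((mem_reach_succ_of_odd hI (Nat.not_even_iff_odd.2 ha.1)
      (c' := doAct c .nolabel) rfl rfl).1 hb).1

lemma tstar_doAct_inter_subset (hI : Inv n c) (hG : IsGold n tG) {a : Action N}
    (ha : App n c a) : tstar tG (doAct c a) ∩ tG ⊆ tstar tG c ∩ tG := by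
  intro b hb
  obtain ⟨hb, hbG⟩ := Finset.mem_inter.1 hb
  refine Finset.mem_inter.2 ⟨?_, hbG⟩
  by_cases hL : c.σ.length < 2
  · exact Finset.mem_union_right _ ((reach_of_length_lt_two hL).symm ▸ hbG)
  rcases Finset.mem_union.1 hb with hbt | hbr
  · cases a with
    | label X =>
      rcases Finset.mem_insert.1 hbt with rfl | hbt
      · exact Finset.mem_union_right _ (top_mem_reach hI (Nat.not_even_iff_odd.2 ha.1) hbG)
      · exact Finset.mem_union_left _ hbt
    | _ => exact Finset.mem_union_left _ hbt
  · exact Finset.mem_union_right _ (reach_doAct_subset hI hG (by omega) ha hbr)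

lemma t_subset_of_reaches {c' : Config N} (h : Reaches n c c') : c.t ⊆ c'.t := by
  induction h with
  | refl => exact subset_rfl
  | tail _ hstep ih =>
    obtain ⟨a, -, rfl⟩ := hstep
    exact ih.trans (t_subset_doAct _ a)

lemma tstar_inter_subset_of_reaches (hI : Inv n c) (hG : IsGold n tG) {c' : Config N}
    (h : Reaches n c c') : tstar tG c' ∩ tG ⊆ tstar tG c ∩ tG := by
  induction h with
  | refl => exact subset_rfl
  | tail hr hstep ih =>
    obtain ⟨a, ha, rfl⟩ := hstep
    exact (tstar_doAct_inter_subset (hI.of_reaches hr) hG ha).trans ih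

lemma tstar_sdiff (tG : Finset (N × ℕ × ℕ)) (c : Config N) : tstar tG c \ tG = c.t \ tG := by
  rw [tstar, Finset.union_sdiff_distrib, Finset.sdiff_eq_empty_iff_subset.2 (reach_subset tG c),
    Finset.union_empty]

lemma tstar_sdiff_subset_doAct (c : Config N) (a : Action N) :
    tstar tG c \ tG ⊆ tstar tG (doAct c a) \ tG := by
  rw [tstar_sdiff, tstar_sdiff]
  exact Finset.sdiff_subset_sdiff (t_subset_doAct c a) subset_rfl

/-- A wrong `sh` or `comb` loses `next(c)`, a wrong `nolabel` loses the gold bracket over the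
top span, and a wrong `label-X` builds a bracket that is not gold. -/
lemma exists_lost_or_wrong_of_not_dyna (hI : Inv n c) (hG : IsGold n tG) {a : Action N}
    (ha : App n c a) (hnd : ¬ Dyna tG c a) :
    (∃ b ∈ reach tG c, b ∉ tstar tG (doAct c a)) ∨ ∃ b ∈ (doAct c a).t, b ∉ tG ∧ b ∉ c.t := by
  by_cases hL : c.σ.length < 2
  · obtain rfl := hI.eq_initial hL
    refine absurd ((dyna_iff_of_length_lt_two hL).2 ?_) hnd
    cases a <;> simp_all [App, initial]
  replace hL : 2 ≤ c.σ.length := by omega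
  simp only [tstar, Finset.mem_union, not_or]
  by_cases he : Even c.z
  · obtain ⟨b, hb⟩ := exists_isNext_s7 hI hG hL (not_final_of_app ha)
    have hbr := leftSet_subset_reach hL hb.1
    have hbt : b ∉ c.t := fun hbt => not_mem_reach_of_mem_t hI hbt hbr
    rw [dyna_iff_of_isNext hI hL he hb] at hnd
    cases a with
    | sh =>
      refine Or.inl ⟨b, hbr, hbt, fun h => hnd (Or.inl ⟨rfl, ?_⟩)⟩
      exact ((mem_reach_doAct_sh hI hG he hL).1 h).2 hb.1
    | comb =>
      refine Or.inl ⟨b, hbr, hbt, fun h => hnd (Or.inr ⟨rfl, ?_⟩)⟩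
      exact ((mem_reach_doAct_comb hI he ha.2).1 h).2 hb.1
    | label => exact absurd ha.1 (Nat.not_odd_iff_even.2 he)
    | nolabel => exact absurd ha.1 (Nat.not_odd_iff_even.2 he)
  · rw [dyna_iff_of_odd hL he] at hnd
    cases a with
    | sh => exact absurd ha.1 he
    | comb => exact absurd ha.1 he
    | label X =>
      exact Or.inr ⟨_, Finset.mem_insert_self _ _, fun hX => hnd (Or.inl ⟨X, hX, rfl⟩),
        hI.top_not_mem_t he X⟩
    | nolabel =>
      obtain ⟨X, hX⟩ : ∃ X, (X, topI c.σ, topJ c.σ) ∈ tG := by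
        by_contra h
        exact hnd (Or.inr ⟨not_exists.1 h, rfl⟩)
      refine Or.inl ⟨_, top_mem_reach hI he hX, hI.top_not_mem_t he X, fun h => ?_⟩
      exact ((mem_reach_succ_of_odd hI he (c' := doAct c .nolabel) rfl rfl).1 h).2 rfl

lemma tstar_ssubset_of_not_dyna (hI : Inv n c) (hG : IsGold n tG) {a : Action N}
    (ha : App n c a) (hnd : ¬ Dyna tG c a) :
    tstar tG (doAct c a) ∩ tG ⊂ tstar tG c ∩ tG ∨
      tstar tG c \ tG ⊂ tstar tG (doAct c a) \ tG := by
  rcases exists_lost_or_wrong_of_not_dyna hI hG ha hnd with ⟨b, hbr, hb⟩ | ⟨b, hbt, hbG, hb⟩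
  · refine Or.inl ((Finset.ssubset_iff_of_subset (tstar_doAct_inter_subset hI hG ha)).2 ?_)
    exact ⟨b, Finset.mem_inter.2 ⟨Finset.mem_union_right _ hbr, reach_subset _ _ hbr⟩,
      fun h => hb (Finset.mem_inter.1 h).1⟩
  · refine Or.inr ((Finset.ssubset_iff_of_subset (tstar_sdiff_subset_doAct c a)).2 ?_)
    rw [tstar_sdiff, tstar_sdiff]
    exact ⟨b, Finset.mem_sdiff.2 ⟨hbt, hbG⟩, fun h => hb (Finset.mem_sdiff.1 h).1⟩

end Monotone

section Optimal

variable {n : ℕ} {tG : Finset (N × ℕ × ℕ)} {c : Config N}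

lemma tstar_of_final (hG : IsGold n tG) (hf : Final n c) : tstar tG c = c.t := by
  obtain ⟨hσ, hz⟩ := hf
  have hn := hG.one_le
  have hi : topI c.σ = 0 := by rw [hσ]; rfl
  have hj : topJ c.σ = n := by rw [hσ]; rfl
  have he : Even c.z := ⟨2 * n - 1, by omega⟩
  rw [tstar, Finset.union_eq_left]
  intro b hb
  have hpq := hG.validSpans b (reach_subset tG c hb)
  rw [mem_reach_iff_s7 (by simp [hσ]), mem_leftSet_iff_s7 (by omega), hi, hj] at hb
  obtain ⟨Y, p, q⟩ := b
  simp only [span_mk, ne_eq, Prod.mk.injEq] at hb hpq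
  rcases hb with ⟨-, -, hp, hq, hne⟩ | ⟨-, hp⟩
  · exact absurd ⟨by omega, by omega⟩ (hne he)
  · omega

theorem tstar_mem_Dset (hG : IsGold n tG) {c : Config N} (hI : Inv n c) :
    tstar tG c ∈ Dset n c := by
  by_cases hf : Final n c
  · exact ⟨c, Relation.ReflTransGen.refl, hf, (tstar_of_final hG hf).symm⟩
  obtain ⟨a, hd⟩ := exists_dyna hI hG hf
  have ha := app_of_dyna hI hG hd
  obtain ⟨c', hr, hf', ht⟩ := tstar_mem_Dset hG (hI.doAct ha)
  exact ⟨c', Relation.ReflTransGen.head ⟨a, ha, rfl⟩ hr, hf',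
    ht.trans (tstar_doAct_of_dyna hI hG ha hd)⟩
termination_by 4 * n - c.z
decreasing_by
  have := hI.z_lt hG.one_le
  simp only [doAct_z]
  omega

end Optimal

section F1

lemma two_mul_div_add_le {g a₁ a₂ e₁ e₂ : ℝ} (hg : 0 ≤ g) (ha₁ : 0 ≤ a₁) (ha : a₁ ≤ a₂)
    (he₂ : 0 ≤ e₂) (he : e₂ ≤ e₁) : 2 * a₁ / (g + (a₁ + e₁)) ≤ 2 * a₂ / (g + (a₂ + e₂)) := by
  rcases ha₁.eq_or_lt with rfl | ha₁
  · simp only [mul_zero, zero_div]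
    positivity
  rw [div_le_div_iff₀ (by linarith) (by linarith)]
  nlinarith [mul_nonneg (sub_nonneg.2 ha) hg, mul_nonneg (sub_nonneg.2 ha) (he₂.trans he),
    mul_nonneg ha₁.le (sub_nonneg.2 he)]

lemma two_mul_div_add_lt {g a₁ a₂ e₁ e₂ : ℝ} (hg : 0 < g) (ha₁ : 0 ≤ a₁) (ha : a₁ ≤ a₂)
    (ha₂ : 0 < a₂) (he₂ : 0 ≤ e₂) (he : e₂ ≤ e₁) (hs : a₁ < a₂ ∨ e₂ < e₁) :
    2 * a₁ / (g + (a₁ + e₁)) < 2 * a₂ / (g + (a₂ + e₂)) := by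
  rw [div_lt_div_iff₀ (by linarith) (by linarith)]
  rcases hs with hs | hs
  · nlinarith [mul_pos (sub_pos.2 hs) hg, mul_nonneg (sub_nonneg.2 ha) (he₂.trans he),
      mul_nonneg ha₁ (sub_nonneg.2 he)]
  · nlinarith [mul_pos ha₂ (sub_pos.2 hs), mul_nonneg (sub_nonneg.2 ha) hg.le,
      mul_nonneg (sub_nonneg.2 ha) he₂]

variable {tG t₁ t₂ : Finset (N × ℕ × ℕ)}

lemma f1_eq (tG t : Finset (N × ℕ × ℕ)) :
    f1 tG t = 2 * (t ∩ tG).card / (tG.card + ((t ∩ tG).card + (t \ tG).card) : ℝ) := by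
  rw [← Nat.cast_add, Finset.card_inter_add_card_sdiff, f1]
  split_ifs with h
  · simp [h]
  have ha : 0 < ((t ∩ tG).card : ℝ) := by
    exact_mod_cast Finset.card_pos.2 (Finset.nonempty_iff_ne_empty.2 h)
  have hg : 0 < (tG.card : ℝ) :=
    ha.trans_le (by exact_mod_cast Finset.card_le_card Finset.inter_subset_right)
  have ht : 0 < (t.card : ℝ) :=
    ha.trans_le (by exact_mod_cast Finset.card_le_card Finset.inter_subset_left)
  field_simp
  ring

lemma f1_le_f1 (hc : t₁ ∩ tG ⊆ t₂ ∩ tG) (hw : t₂ \ tG ⊆ t₁ \ tG) : f1 tG t₁ ≤ f1 tG t₂ := by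
  rw [f1_eq, f1_eq]
  exact two_mul_div_add_le (by positivity) (by positivity)
    (by exact_mod_cast Finset.card_le_card hc) (by positivity)
    (by exact_mod_cast Finset.card_le_card hw)

lemma f1_lt_f1 (hc : t₁ ∩ tG ⊆ t₂ ∩ tG) (hw : t₂ \ tG ⊆ t₁ \ tG) (hne : (t₂ ∩ tG).Nonempty)
    (hs : t₁ ∩ tG ⊂ t₂ ∩ tG ∨ t₂ \ tG ⊂ t₁ \ tG) : f1 tG t₁ < f1 tG t₂ := by
  rw [f1_eq, f1_eq]
  have ha₂ : 0 < ((t₂ ∩ tG).card : ℝ) := by exact_mod_cast hne.card_pos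
  refine two_mul_div_add_lt (ha₂.trans_le ?_) (by positivity)
    (by exact_mod_cast Finset.card_le_card hc) ha₂ (by positivity)
    (by exact_mod_cast Finset.card_le_card hw) ?_
  · exact_mod_cast Finset.card_le_card Finset.inter_subset_right
  · rcases hs with hs | hs
    · exact Or.inl (by exact_mod_cast Finset.card_lt_card hs)
    · exact Or.inr (by exact_mod_cast Finset.card_lt_card hs)

end F1

section ConfigF1

variable {n : ℕ} {tG : Finset (N × ℕ × ℕ)} {c : Config N}

lemma isGreatest_f1_tstar (hI : Inv n c) (hG : IsGold n tG) :
    IsGreatest (f1 tG '' Dset n c) (f1 tG (tstar tG c)) := by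
  refine ⟨⟨_, tstar_mem_Dset hG hI, rfl⟩, ?_⟩
  rintro _ ⟨_, ⟨c', hr, hf, rfl⟩, rfl⟩
  refine f1_le_f1 ?_ ?_
  · rw [← tstar_of_final hG hf]
    exact tstar_inter_subset_of_reaches hI hG hr
  · rw [tstar_sdiff]
    exact Finset.sdiff_subset_sdiff (t_subset_of_reaches hr) subset_rfl

lemma configF1_eq (hI : Inv n c) (hG : IsGold n tG) : configF1 n tG c = f1 tG (tstar tG c) :=
  (isGreatest_f1_tstar hI hG).csSup_eq

lemma tstar_inter_nonempty (hI : Inv n c) (hG : IsGold n tG) (hnf : ¬ Final n c) :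
    (tstar tG c ∩ tG).Nonempty := by
  obtain ⟨X, hX⟩ := hG.root
  refine ⟨(X, 0, n), Finset.mem_inter.2 ⟨Finset.mem_union_right _ ?_, hX⟩⟩
  by_cases hL : c.σ.length < 2
  · rwa [reach_of_length_lt_two hL]
  · exact leftSet_subset_reach (by omega) (root_mem_leftSet hI (by omega) hnf hX)

end ConfigF1

theorem dyna_eq_oracle_general (n : ℕ) (tG : Finset (N × ℕ × ℕ))
    (hG : IsGold n tG) (c : Config N) (hc : Valid n c)
    (a : Action N) :
    Dyna tG c a ↔ (App n c a ∧ configF1 n tG (doAct c a) = configF1 n tG c) := by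
  have hI := Inv.of_valid hc
  constructor
  · intro hd
    have ha := app_of_dyna hI hG hd
    refine ⟨ha, ?_⟩
    rw [configF1_eq (hI.doAct ha) hG, configF1_eq hI hG, tstar_doAct_of_dyna hI hG ha hd]
  · rintro ⟨ha, heq⟩
    by_contra hnd
    rw [configF1_eq (hI.doAct ha) hG, configF1_eq hI hG] at heq
    exact (f1_lt_f1 (tstar_doAct_inter_subset hI hG ha) (tstar_sdiff_subset_doAct c a)
      (tstar_inter_nonempty hI hG (not_final_of_app ha))
      (tstar_ssubset_of_not_dyna hI hG ha hnd)).ne heq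

/-- Theorem 2 (main result): the dynamic-oracle policy coincides with the
abstract F1-optimal oracle: `τ ∈ dyna(c)` iff `τ` is applicable at `c` and
`F1(τ(c)) = F1(c)`. -/
theorem dyna_eq_oracle (n : ℕ) (hn : 1 ≤ n) (tG : Finset (N × ℕ × ℕ))
    (hG : IsGold n tG) (c : Config N) (hc : Valid n c) (hnf : ¬ Final n c)
    (a : Action N) :
    Dyna tG c a ↔ (App n c a ∧ configF1 n tG (doAct c a) = configF1 n tG c) :=
  dyna_eq_oracle_general n tG hG c hc a

end SpanParser
end
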